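/- Let δ > 1 be real and y = s + s* − δ^{−1/2} e. Then the spectrum of y, as a subset of ℂ, is exactly the real interval [−2, 2], i.e. spec(y) = {x + 0·i : x ∈ ℝ, −2 ≤ x ≤ 2}. -/

import Mathlib

/-!
Put `e = 1 - s s*`, a projection because `s* s = 1`. The identities
`2 + y = (1 + s)(1 + s)* + (1 - t) e` and `2 - y = (1 - s)(1 - s)* + (1 + t) e`, with
`t = δ^{-1/2} ∈ [0, 1]`, show that `-2 ≤ y ≤ 2` in the order of the C⋆-algebra `B(H)`, so the
spectrum of the self-adjoint operator `y` lies in `[-2, 2]`. Conversely, write `x ∈ [-2, 2]` as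
`z + z̄` with `|z| = 1`; the partial sums `g_n = ∑_{k<n} z^k ξ_k` have `‖g_n‖ = √n`, while
`(x - y) g_{n+1} = (z - s)(z^n ξ_n) + (z̄ + t) ξ_0` stays bounded, so `x - y` is not invertible.
-/

open ContinuousLinearMap

noncomputable section

/-- The Hilbert space `ℓ²(ℕ, ℂ)`. -/
abbrev H : Type := lp (fun _ : ℕ => ℂ) 2

/-- The standard orthonormal basis of `ℓ²(ℕ, ℂ)`. -/
def ξ (n : ℕ) : H := lp.single 2 n 1

open Set Filter ComplexConjugate
open scoped InnerProductSpace

section CStarAlgebra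

variable {A : Type*} [CStarAlgebra A] {s : A}

lemma isStarProjection_mul_star_of_star_mul_self (hs : star s * s = 1) :
    IsStarProjection (s * star s) where
  isIdempotentElem := by
    rw [IsIdempotentElem, mul_assoc, ← mul_assoc (star s), hs, one_mul]
  isSelfAdjoint := .mul_star_self s

lemma isSelfAdjoint_add_star_sub_smul (hs : star s * s = 1) (t : ℝ) :
    IsSelfAdjoint (s + star s - t • (1 - s * star s)) :=
  (IsSelfAdjoint.add_star_self s).sub
    ((IsSelfAdjoint.all t).smul
      (isStarProjection_mul_star_of_star_mul_self hs).one_sub.isSelfAdjoint)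

lemma two_add_add_star_sub_smul (t : ℝ) :
    2 + (s + star s - t • (1 - s * star s))
      = (1 + s) * star (1 + s) + (1 - t) • (1 - s * star s) := by
  simp only [star_add, star_one, mul_add, add_mul, one_mul, mul_one, sub_smul, one_smul]
  rw [← one_add_one_eq_two]
  abel

lemma two_sub_add_star_sub_smul (t : ℝ) :
    2 - (s + star s - t • (1 - s * star s))
      = (1 - s) * star (1 - s) + (1 + t) • (1 - s * star s) := by
  simp only [star_sub, star_one, mul_sub, sub_mul, one_mul, mul_one, add_smul, one_smul]
  rw [← one_add_one_eq_two]
  abel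

lemma spectrum_add_star_sub_smul_subset [PartialOrder A] [StarOrderedRing A]
    (hs : star s * s = 1) {t : ℝ} (ht : |t| ≤ 1) :
    spectrum ℝ (s + star s - t • (1 - s * star s)) ⊆ Icc (-2) 2 := by
  have hsa := isSelfAdjoint_add_star_sub_smul hs t
  have he := (isStarProjection_mul_star_of_star_mul_self hs).one_sub.nonneg
  obtain ⟨ht₁, ht₂⟩ := abs_le.mp ht
  have hlow : algebraMap ℝ A (-2) ≤ s + star s - t • (1 - s * star s) := by
    rw [← sub_nonneg, map_neg, map_ofNat, sub_neg_eq_add, add_comm, two_add_add_star_sub_smul]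
    exact add_nonneg (mul_star_self_nonneg _) (smul_nonneg (by linarith) he)
  have hup : s + star s - t • (1 - s * star s) ≤ algebraMap ℝ A 2 := by
    rw [← sub_nonneg, map_ofNat, two_sub_add_star_sub_smul]
    exact add_nonneg (mul_star_self_nonneg _) (smul_nonneg (by linarith) he)
  exact fun x hx ↦ ⟨(algebraMap_le_iff_le_spectrum hsa).1 hlow x hx,
    (le_algebraMap_iff_spectrum_le hsa).1 hup x hx⟩

end CStarAlgebra

lemma ContinuousLinearMap.not_isUnit_of_tendsto_norm_atTop {𝕜 E : Type*}
    [NontriviallyNormedField 𝕜] [NormedAddCommGroup E] [NormedSpace 𝕜 E] {T : E →L[𝕜] E}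
    (v : ℕ → E) {C : ℝ} (hT : ∀ n, ‖T (v n)‖ ≤ C) (hv : Tendsto (‖v ·‖) atTop atTop) :
    ¬ IsUnit T := by
  intro hunit
  obtain ⟨V, hV⟩ := hunit.exists_left_inv
  obtain ⟨n, hn⟩ := (hv.eventually_gt_atTop (‖V‖ * C)).exists
  refine hn.not_ge ?_
  calc ‖v n‖ = ‖V (T (v n))‖ := by rw [← mul_apply_eq_comp, hV, one_apply_eq_self]
    _ ≤ ‖V‖ * ‖T (v n)‖ := le_opNorm _ _
    _ ≤ ‖V‖ * C := by gcongr; exact hT n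

lemma Complex.exists_norm_eq_one_add_conj_eq {x : ℝ} (hx : x ∈ Icc (-2) 2) :
    ∃ z : ℂ, ‖z‖ = 1 ∧ z + conj z = x := by
  refine ⟨exp (Real.arccos (x / 2) * I), norm_exp_ofReal_mul_I _, ?_⟩
  rw [add_conj, exp_ofReal_mul_I_re, Real.cos_arccos (by linarith [hx.1]) (by linarith [hx.2])]
  push_cast
  ring

section HilbertSpace

variable {E : Type*} [NormedAddCommGroup E] [InnerProductSpace ℂ E]

/-- `geomOrbitSum s z u n = ∑_{k<n} z ^ k • s ^ k u`. -/
def geomOrbitSum (s : E →L[ℂ] E) (z : ℂ) (u : E) : ℕ → E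
  | 0 => 0
  | n + 1 => u + z • s (geomOrbitSum s z u n)

namespace geomOrbitSum

variable {s : E →L[ℂ] E} {z : ℂ} {u : E}

lemma succ_sub_self (n : ℕ) :
    geomOrbitSum s z u (n + 2) - geomOrbitSum s z u (n + 1)
      = z • s (geomOrbitSum s z u (n + 1) - geomOrbitSum s z u n) := by
  simp only [geomOrbitSum, map_sub, smul_sub]
  abel

variable [CompleteSpace E] (hs : adjoint s * s = 1) (hz : ‖z‖ = 1) (hu : ‖u‖ = 1)
  (hsu : adjoint s u = 0)
include hs

include hz hu in
lemma norm_succ_sub_self (n : ℕ) :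
    ‖geomOrbitSum s z u (n + 1) - geomOrbitSum s z u n‖ = 1 := by
  have hiso := (norm_map_iff_adjoint_comp_self s).2 hs
  induction n with
  | zero => simp [geomOrbitSum, hu]
  | succ n ih => rw [succ_sub_self, norm_smul, hiso, hz, ih, one_mul]

include hz hu hsu in
lemma norm_sq (n : ℕ) : ‖geomOrbitSum s z u n‖ ^ 2 = n := by
  have hiso := (norm_map_iff_adjoint_comp_self s).2 hs
  induction n with
  | zero => simp [geomOrbitSum]
  | succ n ih =>
    have horth : ⟪u, z • s (geomOrbitSum s z u n)⟫_ℂ = 0 := by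
      rw [inner_smul_right, ← adjoint_inner_left, hsu, inner_zero_left, mul_zero]
    rw [geomOrbitSum, sq, norm_add_sq_eq_norm_sq_add_norm_sq_of_inner_eq_zero _ _ horth,
      norm_smul, hiso, hz, one_mul, hu]
    push_cast
    linear_combination ih

include hsu in
lemma adjoint_apply_succ (n : ℕ) :
    adjoint s (geomOrbitSum s z u (n + 1)) = z • geomOrbitSum s z u n := by
  rw [geomOrbitSum, map_add, map_smul, hsu, ← mul_apply_eq_comp, hs, one_apply_eq_self, zero_add]

include hz hsu in
lemma sub_apply_succ (t : ℂ) (n : ℕ) :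
    (algebraMap ℂ (E →L[ℂ] E) (z + conj z) - (s + adjoint s - t • (1 - s * adjoint s)))
        (geomOrbitSum s z u (n + 1))
      = z • (geomOrbitSum s z u (n + 1) - geomOrbitSum s z u n)
          - s (geomOrbitSum s z u (n + 1) - geomOrbitSum s z u n) + (conj z + t) • u := by
  have hzz : conj z * z = 1 := by
    rw [Complex.conj_mul', hz]
    norm_num
  simp only [sub_apply, add_apply, smul_apply, one_apply_eq_self,
    ContinuousLinearMap.algebraMap_apply, mul_apply_eq_comp, adjoint_apply_succ hs hsu n, map_sub,
    map_smul]
  simp only [geomOrbitSum, map_add, map_smul]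
  linear_combination (norm := module) hzz • s (geomOrbitSum s z u n)

end geomOrbitSum

variable [CompleteSpace E] {s : E →L[ℂ] E} {u : E}

lemma mem_spectrum_add_adjoint_sub_smul (hs : adjoint s * s = 1) (hu : ‖u‖ = 1)
    (hsu : adjoint s u = 0) (t : ℂ) {x : ℝ} (hx : x ∈ Icc (-2) 2) :
    (x : ℂ) ∈ spectrum ℂ (s + adjoint s - t • (1 - s * adjoint s)) := by
  obtain ⟨z, hz, hzx⟩ := Complex.exists_norm_eq_one_add_conj_eq hx
  have hiso := (norm_map_iff_adjoint_comp_self s).2 hs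
  have hnorm (n : ℕ) : ‖geomOrbitSum s z u n‖ = √n := by
    rw [← geomOrbitSum.norm_sq hs hz hu hsu n, Real.sqrt_sq (norm_nonneg _)]
  rw [spectrum.mem_iff, ← hzx]
  refine not_isUnit_of_tendsto_norm_atTop (fun n ↦ geomOrbitSum s z u (n + 1))
    (C := 2 + ‖conj z + t‖) (fun n ↦ ?_) ?_
  · rw [geomOrbitSum.sub_apply_succ hs hz hsu]
    set d := geomOrbitSum s z u (n + 1) - geomOrbitSum s z u n
    have hd : ‖d‖ = 1 := geomOrbitSum.norm_succ_sub_self hs hz hu n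
    calc ‖z • d - s d + (conj z + t) • u‖ ≤ ‖z • d‖ + ‖s d‖ + ‖(conj z + t) • u‖ :=
          (norm_add_le _ _).trans (add_le_add_left (norm_sub_le _ _) _)
      _ = 2 + ‖conj z + t‖ := by
          rw [norm_smul, norm_smul, hiso, hz, hd, hu]
          ring
  · simp only [hnorm]
    exact (tendsto_add_atTop_iff_nat 1).2 (Real.tendsto_sqrt_atTop.comp tendsto_natCast_atTop_atTop)

theorem spectrum_add_adjoint_sub_smul (hs : adjoint s * s = 1) (hu : ‖u‖ = 1)
    (hsu : adjoint s u = 0) {t : ℝ} (ht : |t| ≤ 1) :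
    spectrum ℂ (s + adjoint s - (t : ℂ) • (1 - s * adjoint s)) = Complex.ofReal '' Icc (-2) 2 := by
  have hs' : star s * s = 1 := by rwa [star_eq_adjoint]
  have hy : s + adjoint s - (t : ℂ) • (1 - s * adjoint s) = s + star s - t • (1 - s * star s) := by
    rw [star_eq_adjoint, Complex.coe_smul]
  rw [hy, ← (isSelfAdjoint_add_star_sub_smul hs' t).spectrumRestricts.algebraMap_image,
    Complex.coe_algebraMap]
  refine congrArg _ (subset_antisymm (spectrum_add_star_sub_smul_subset hs' ht) fun x hx ↦ ?_)
  rw [← spectrum.algebraMap_mem_iff ℂ, ← hy]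
  exact mem_spectrum_add_adjoint_sub_smul hs hu hsu t hx

end HilbertSpace

lemma inner_ξ_left (n : ℕ) (v : H) : ⟪ξ n, v⟫_ℂ = v n := by
  simp [ξ, lp.inner_single_left]

lemma ext_inner_ξ {v w : H} (h : ∀ n, ⟪ξ n, v⟫_ℂ = ⟪ξ n, w⟫_ℂ) : v = w :=
  lp.ext <| funext fun n ↦ by simpa only [inner_ξ_left] using h n

lemma inner_ξ_ξ (m n : ℕ) : ⟪ξ m, ξ n⟫_ℂ = if m = n then 1 else 0 := by
  rw [inner_ξ_left, ξ, lp.single_apply, Pi.single_apply, eq_comm]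

section Shift

variable {s : H →L[ℂ] H} (hs : ∀ n : ℕ, s (ξ n) = ξ (n + 1))
include hs

lemma inner_ξ_adjoint_shift (n : ℕ) (v : H) : ⟪ξ n, adjoint s v⟫_ℂ = ⟪ξ (n + 1), v⟫_ℂ := by
  rw [adjoint_inner_right, hs]

lemma adjoint_shift_ξ_zero : adjoint s (ξ 0) = 0 :=
  ext_inner_ξ fun n ↦ by simp [inner_ξ_adjoint_shift hs, inner_ξ_ξ]

lemma adjoint_shift_ξ_succ (n : ℕ) : adjoint s (ξ (n + 1)) = ξ n :=
  ext_inner_ξ fun m ↦ by simp [inner_ξ_adjoint_shift hs, inner_ξ_ξ]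

lemma adjoint_shift_mul_self : adjoint s * s = 1 :=
  ext fun v ↦ ext_inner_ξ fun n ↦ by
    rw [mul_apply_eq_comp, inner_ξ_adjoint_shift hs, ← adjoint_inner_left,
      adjoint_shift_ξ_succ hs, one_apply_eq_self]

lemma one_sub_shift_mul_adjoint {e : H →L[ℂ] H} (he : ∀ v : H, e v = ⟪ξ 0, v⟫_ℂ • ξ 0) :
    1 - s * adjoint s = e :=
  ext fun v ↦ ext_inner_ξ fun n ↦ by
    rw [sub_apply, one_apply_eq_self, mul_apply_eq_comp, inner_sub_right,
      ← adjoint_inner_left, he, inner_smul_right, inner_ξ_ξ]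
    cases n with
    | zero => simp [adjoint_shift_ξ_zero hs]
    | succ n => simp [adjoint_shift_ξ_succ hs, inner_ξ_adjoint_shift hs]

end Shift

/-- If `δ > 1`, `s` is the unilateral shift on `ℓ²(ℕ,ℂ)` and `e` is the orthogonal
projection onto the span of `ξ 0`, then the spectrum of `y = s + s* − δ^{-1/2} e`,
as a subset of `ℂ`, is exactly the real interval `[-2, 2]`. -/
theorem stmt3 (δ : ℝ) (hδ : 1 < δ) (s e : H →L[ℂ] H)
    (hs : ∀ n : ℕ, s (ξ n) = ξ (n + 1))
    (he : ∀ v : H, e v = (inner ℂ (ξ 0) v : ℂ) • ξ 0) :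
    spectrum ℂ (s + adjoint s - (((Real.sqrt δ)⁻¹ : ℝ) : ℂ) • e)
      = Complex.ofReal '' Set.Icc (-2 : ℝ) 2 := by
  have ht : |(Real.sqrt δ)⁻¹| ≤ 1 := by
    rw [abs_of_nonneg (by positivity)]
    exact inv_le_one_of_one_le₀ (Real.one_le_sqrt.2 hδ.le)
  rw [← one_sub_shift_mul_adjoint hs he]
  exact spectrum_add_adjoint_sub_smul (adjoint_shift_mul_self hs)
    (by rw [ξ, lp.norm_single (by norm_num), norm_one]) (adjoint_shift_ξ_zero hs) ht
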